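/- arXiv:2204.02584 — 9 statements merged into one kernel-verified Lean document; each statement's English description precedes it below -/
import Mathlib

section
/- Let k be a field, let (g,[-,-]_g) and (h,[-,-]_h) be Lie algebras over k, and let ρ be a coherent action of g on h. Then the bilinear bracket on the direct sum vector space g ⊕ h defined by [(x,u),(y,v)]_ρ = ([x,y]_g, ρ(x)v + [u,v]_h) satisfies the left Leibniz identity [a,[b,c]_ρ]_ρ = [[a,b]_ρ,c]_ρ + [b,[a,c]_ρ]_ρ for all a,b,c ∈ g ⊕ h; that is, (g ⊕ h, [-,-]_ρ) is a Leibniz algebra (the nonabelian hemisemidirect product). -/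
variable {k : Type*} [Field k]
variable {g : Type*} [LieRing g] [LieAlgebra k g]
variable {h : Type*} [LieRing h] [LieAlgebra k h]

/-- The nonabelian hemisemidirect product bracket on `g × h`:
`[(x,u),(y,v)] = ([x,y], ρ(x)v + [u,v])`. -/
def hemiBracket (ρ : g →ₗ[k] h →ₗ[k] h) (a b : g × h) : g × h :=
  (⁅a.1, b.1⁆, ρ a.1 b.2 + ⁅a.2, b.2⁆)

/-- given a coherent action `ρ` of the Lie algebra `g` on the Lie algebra `h`,
the hemisemidirect product bracket on `g ⊕ h` satisfies the left Leibniz identity,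
so `g ⊕ h` is a Leibniz algebra. -/
theorem hemiBracket_leibniz (ρ : g →ₗ[k] h →ₗ[k] h)
    (hρ_der : ∀ (x : g) (u v : h), ρ x ⁅u, v⁆ = ⁅ρ x u, v⁆ + ⁅u, ρ x v⁆)
    (hρ_hom : ∀ (x y : g) (u : h), ρ ⁅x, y⁆ u = ρ x (ρ y u) - ρ y (ρ x u))
    (hρ_coh : ∀ (x : g) (u v : h), ⁅ρ x u, v⁆ = (0 : h)) :
    ∀ a b c : g × h,
      hemiBracket ρ a (hemiBracket ρ b c) =
        hemiBracket ρ (hemiBracket ρ a b) c + hemiBracket ρ b (hemiBracket ρ a c) := by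
  rintro ⟨x, u⟩ ⟨y, v⟩ ⟨z, w⟩
  simp only [hemiBracket, Prod.mk_add_mk, Prod.mk.injEq]
  constructor
  · exact leibniz_lie x y z
  · simp only [map_add, hρ_der, hρ_hom, hρ_coh, lie_add, add_lie, leibniz_lie u v w,
      zero_add, add_zero]
    abel
end

section
/- Let (h,[-,-]_h) be a Lie algebra and let D̄(h) = {D ∈ Der(h) : [Du,v]_h = 0 for all u,v ∈ h} be the coherent derivation Lie algebra. Equip the direct sum vector space D̄(h) ⊕ h with the direct sum Lie bracket [(A,u),(B,v)] = ([A,B],[u,v]_h), and define ρ : D̄(h) → gl(D̄(h) ⊕ h) by ρ(A)(B,v) = (0, Av). Then ρ is a coherent action of the Lie algebra D̄(h) on the Lie algebra D̄(h) ⊕ h, and the projection pr : D̄(h) ⊕ h → D̄(h), pr(A,u) = A, is a nonabelian embedding tensor on D̄(h) with respect to (D̄(h) ⊕ h; ρ). -/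
variable {k : Type*} [Field k]
variable {h : Type*} [LieRing h] [LieAlgebra k h]

/-- A coherent derivation of the Lie algebra `h`: a derivation `D` with `[Du,v] = 0`
for all `u, v`. -/
def IsCoherentDer (D : Module.End k h) : Prop :=
  (∀ u v : h, D ⁅u, v⁆ = ⁅D u, v⁆ + ⁅u, D v⁆) ∧ ∀ u v : h, ⁅D u, v⁆ = (0 : h)

/-- The direct sum Lie bracket on `D̄(h) ⊕ h` (elements modelled as pairs in
`Module.End k h × h`): `[(A,u),(B,v)] = ([A,B],[u,v])`. -/
def dsBracket (p q : Module.End k h × h) : Module.End k h × h :=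
  (⁅p.1, q.1⁆, ⁅p.2, q.2⁆)

/-- The map `ρ : D̄(h) → gl(D̄(h) ⊕ h)`, `ρ(A)(B,v) = (0, Av)`. -/
def dsRho (A : Module.End k h) (p : Module.End k h × h) : Module.End k h × h :=
  (0, A p.2)

/-!
`ρ(A)` kills the `D̄(h)`-component and acts by `A` on the `h`-component, so each axiom reduces
to a property of `A` on `h` alone: the Leibniz rule for `A` gives that `ρ(A)` is a derivation,
`ρ(A)ρ(B) = (0, AB)` gives that `ρ` preserves commutators, and `[Au, v] = 0` gives coherence.
Since `ρ` takes values in `0 ⊕ h`, `pr (ρ(pr p) q + [p, q]) = pr [p, q] = [pr p, pr q]` for any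
`p, q`.
-/

section DirectSum

variable (p q : Module.End k h × h)

@[simp]
theorem dsBracket_fst : (dsBracket p q).1 = ⁅p.1, q.1⁆ := rfl

@[simp]
theorem dsBracket_snd : (dsBracket p q).2 = ⁅p.2, q.2⁆ := rfl

@[simp]
theorem dsRho_fst (A : Module.End k h) : (dsRho A p).1 = 0 := rfl

@[simp]
theorem dsRho_snd (A : Module.End k h) : (dsRho A p).2 = A p.2 := rfl

theorem dsRho_dsBracket {A : Module.End k h} (hA : ∀ u v : h, A ⁅u, v⁆ = ⁅A u, v⁆ + ⁅u, A v⁆) :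
    dsRho A (dsBracket p q) = dsBracket (dsRho A p) q + dsBracket p (dsRho A q) :=
  Prod.ext (by simp [LieRing.of_associative_ring_bracket]) (by simp [hA])

theorem dsRho_lie (A B : Module.End k h) :
    dsRho ⁅A, B⁆ p = dsRho A (dsRho B p) - dsRho B (dsRho A p) :=
  Prod.ext (by simp) (by simp [LieRing.of_associative_ring_bracket])

theorem dsBracket_dsRho_left_eq_zero {A : Module.End k h} (hA : ∀ u v : h, ⁅A u, v⁆ = 0) :
    dsBracket (dsRho A p) q = 0 :=
  Prod.ext (by simp [LieRing.of_associative_ring_bracket]) (by simp [hA])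

theorem fst_dsRho_add_dsBracket (A : Module.End k h) :
    (dsRho A q + dsBracket p q).1 = ⁅p.1, q.1⁆ := by
  simp

end DirectSum

/-- `ρ(A)(B,v) = (0, Av)` is a coherent action of the coherent derivation Lie
algebra `D̄(h)` on the direct sum Lie algebra `D̄(h) ⊕ h`, and the projection
`pr(A,u) = A` is a nonabelian embedding tensor on `D̄(h)` with respect to this action. -/
theorem projection_nonabelianEmbeddingTensor :
    -- each ρ(A) is a derivation of the direct sum Lie algebra
    (∀ A : Module.End k h, IsCoherentDer A → ∀ p q : Module.End k h × h,
      dsRho A (dsBracket p q) = dsBracket (dsRho A p) q + dsBracket p (dsRho A q)) ∧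
    -- ρ is a Lie algebra homomorphism
    (∀ A B : Module.End k h, IsCoherentDer A → IsCoherentDer B →
      ∀ p : Module.End k h × h,
        dsRho ⁅A, B⁆ p = dsRho A (dsRho B p) - dsRho B (dsRho A p)) ∧
    -- the action is coherent: [ρ(A)p, q] = 0
    (∀ A : Module.End k h, IsCoherentDer A → ∀ p q : Module.End k h × h,
      dsBracket (dsRho A p) q = 0) ∧
    -- pr is a nonabelian embedding tensor: [pr p, pr q] = pr(ρ(pr p)q + [p,q])
    (∀ p q : Module.End k h × h, IsCoherentDer p.1 → IsCoherentDer q.1 →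
      ⁅p.1, q.1⁆ = (dsRho p.1 q + dsBracket p q).1) :=
  ⟨fun _ hA p q => dsRho_dsBracket p q hA.1,
    fun A B _ _ p => dsRho_lie p A B,
    fun _ hA p q => dsBracket_dsRho_left_eq_zero p q hA.2,
    fun p q _ _ => (fst_dsRho_add_dsBracket p q p.1).symm⟩
end

section
/- Let (h,[-,-]_h,▷) be a Leibniz-Lie algebra. Then the bilinear bracket [x,y] := x▷y + [x,y]_h satisfies the left Leibniz identity [x,[y,z]] = [[x,y],z] + [y,[x,z]] for all x,y,z ∈ h; that is, (h,[-,-]) is a Leibniz algebra (the subadjacent Leibniz algebra of the Leibniz-Lie algebra). -/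
variable {k : Type*} [Field k]
variable {h : Type*} [LieRing h] [LieAlgebra k h]

/-- if `(h, [-,-]_h, ▷)` is a Leibniz-Lie algebra, then the bracket
`[x,y] = x▷y + [x,y]_h` satisfies the left Leibniz identity, i.e. `(h,[-,-])` is a Leibniz
algebra (the subadjacent Leibniz algebra). -/
theorem subadjacent_leibniz (t : h →ₗ[k] h →ₗ[k] h)
    (ht1 : ∀ x y z : h, t x (t y z) = t (t x y) z + t y (t x z) + t ⁅x, y⁆ z)
    (ht2 : ∀ x y z : h, t x ⁅y, z⁆ = 0)
    (ht3 : ∀ x y z : h, ⁅t x y, z⁆ = (0 : h)) :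
    ∀ x y z : h,
      (t x (t y z + ⁅y, z⁆) + ⁅x, t y z + ⁅y, z⁆⁆) =
        (t (t x y + ⁅x, y⁆) z + ⁅t x y + ⁅x, y⁆, z⁆) +
          (t y (t x z + ⁅x, z⁆) + ⁅y, t x z + ⁅x, z⁆⁆) := by
  intro x y z
  have ht4 : ∀ a b c : h, ⁅a, t b c⁆ = (0 : h) := fun a b c => by
    rw [← lie_skew, ht3, neg_zero]
  simp only [map_add, LinearMap.add_apply, ht2, ht3, ht4, lie_add, add_lie, lie_zero, zero_lie,
    add_zero, zero_add]
  rw [ht1 x y z, leibniz_lie x y z]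
  abel
end

section
/- Let (h,[-,-]_h,▷) be a Leibniz-Lie algebra, and define L : h → End(h) by L_x(y) = x▷y and the subadjacent bracket [x,y] = x▷y + [x,y]_h. Then L_{[x,y]} = L_x ∘ L_y − L_y ∘ L_x for all x,y ∈ h; that is, (h; L, 0) is a representation of the subadjacent Leibniz algebra (h,[-,-]) on the vector space h. -/
variable {k : Type*} [Field k]
variable {h : Type*} [LieRing h] [LieAlgebra k h]

/-- for a Leibniz-Lie algebra `(h,[-,-]_h,▷)` with `L_x(y) = x▷y` and
subadjacent bracket `[x,y] = x▷y + [x,y]_h`, one has `L_{[x,y]} = L_x ∘ L_y − L_y ∘ L_x`;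
that is, `(h; L, 0)` is a representation of the subadjacent Leibniz algebra on `h`. -/
theorem subadjacent_representation (t : h →ₗ[k] h →ₗ[k] h)
    (ht1 : ∀ x y z : h, t x (t y z) = t (t x y) z + t y (t x z) + t ⁅x, y⁆ z)
    (ht2 : ∀ x y z : h, t x ⁅y, z⁆ = 0)
    (ht3 : ∀ x y z : h, ⁅t x y, z⁆ = (0 : h)) :
    ∀ x y z : h, t (t x y + ⁅x, y⁆) z = t x (t y z) - t y (t x z) := by
  intro x y z
  have := ht1 x y z
  simp only [map_add, LinearMap.add_apply]
  rw [this]; abel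
end

section
/- Let T : h → g be a nonabelian embedding tensor on a Lie algebra g with respect to a coherent action (h;ρ). Define u ▷ v := ρ(Tu)v for u,v ∈ h. Then (h,[-,-]_h,▷) is a Leibniz-Lie algebra: for all u,v,w ∈ h one has u▷(v▷w) = (u▷v)▷w + v▷(u▷w) + [u,v]_h▷w, and u▷[v,w]_h = 0 and [u▷v, w]_h = 0. -/
variable {k : Type*} [Field k]
variable {g : Type*} [LieRing g] [LieAlgebra k g]
variable {h : Type*} [LieRing h] [LieAlgebra k h]

/-- a nonabelian embedding tensor `T` induces a Leibniz-Lie algebra structure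
on `(h,[-,-]_h)` via `u ▷ v = ρ(Tu)v`. -/
theorem nonabelianEmbeddingTensor_leibnizLie (ρ : g →ₗ[k] h →ₗ[k] h)
    (hρ_der : ∀ (x : g) (u v : h), ρ x ⁅u, v⁆ = ⁅ρ x u, v⁆ + ⁅u, ρ x v⁆)
    (hρ_hom : ∀ (x y : g) (u : h), ρ ⁅x, y⁆ u = ρ x (ρ y u) - ρ y (ρ x u))
    (hρ_coh : ∀ (x : g) (u v : h), ⁅ρ x u, v⁆ = (0 : h))
    (T : h →ₗ[k] g)
    (hT : ∀ u v : h, ⁅T u, T v⁆ = T (ρ (T u) v + ⁅u, v⁆)) :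
    (∀ u v w : h,
      ρ (T u) (ρ (T v) w) =
        ρ (T (ρ (T u) v)) w + ρ (T v) (ρ (T u) w) + ρ (T ⁅u, v⁆) w) ∧
    (∀ u v w : h, ρ (T u) ⁅v, w⁆ = 0) ∧
    (∀ u v w : h, ⁅ρ (T u) v, w⁆ = (0 : h)) := by
  refine ⟨fun u v w => ?_, fun u v w => ?_, fun u v w => hρ_coh _ _ _⟩
  · have := hρ_hom (T u) (T v) w
    rw [hT, map_add, map_add] at this
    simp only [LinearMap.add_apply] at this
    rw [eq_sub_iff_add_eq] at this
    rw [← this]; abel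
  · rw [hρ_der, hρ_coh, ← lie_skew, hρ_coh]
    simp
end

section
/- Let (h,[-,-]_h,▷) be a Leibniz-Lie algebra and define L : h → End(h) by L_u(v) = u▷v. Then for each u ∈ h, L_u is a coherent derivation of the Lie algebra (h,[-,-]_h) (i.e. L_u[v,w]_h = [L_u v, w]_h + [v, L_u w]_h and [L_u v, w]_h = 0 for all v,w ∈ h), and L_u ∘ L_v − L_v ∘ L_u = L_{[u,v]_h + L_u(v)} for all u,v ∈ h; that is, L : h → D̄(h) is a nonabelian embedding tensor on the coherent derivation Lie algebra D̄(h) with respect to its natural (coherent) action on (h,[-,-]_h). -/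
variable {k : Type*} [Field k]
variable {h : Type*} [LieRing h] [LieAlgebra k h]

/-- for a Leibniz-Lie algebra `(h,[-,-]_h,▷)`, the map `L : h → D̄(h)`,
`L_u(v) = u▷v`, takes values in the coherent derivations and satisfies
`L_u ∘ L_v − L_v ∘ L_u = L_{[u,v]_h + L_u v}`; that is, `L` is a nonabelian embedding tensor
on the coherent derivation Lie algebra `D̄(h)` with respect to its natural coherent action
on `(h,[-,-]_h)`. -/
theorem leibnizLie_L_nonabelianEmbeddingTensor (t : h →ₗ[k] h →ₗ[k] h)
    (ht1 : ∀ x y z : h, t x (t y z) = t (t x y) z + t y (t x z) + t ⁅x, y⁆ z)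
    (ht2 : ∀ x y z : h, t x ⁅y, z⁆ = 0)
    (ht3 : ∀ x y z : h, ⁅t x y, z⁆ = (0 : h)) :
    -- each L_u is a derivation of (h,[-,-]_h)
    (∀ u v w : h, t u ⁅v, w⁆ = ⁅t u v, w⁆ + ⁅v, t u w⁆) ∧
    -- each L_u is coherent
    (∀ u v w : h, ⁅t u v, w⁆ = (0 : h)) ∧
    -- the nonabelian embedding tensor identity [L_u, L_v] = L_{[u,v]_h + L_u v}
    (∀ u v w : h, t u (t v w) - t v (t u w) = t (⁅u, v⁆ + t u v) w) := by
  refine ⟨fun u v w => ?_, ht3, fun u v w => ?_⟩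
  · rw [ht2, ht3, ← lie_skew, ht3]; simp
  · rw [ht1 u v w, map_add, LinearMap.add_apply]; abel
end

section
/- Let g and h be Lie algebras over ℂ, ρ a coherent action of g on h, T : h → g a nonabelian embedding tensor, and 𝔗 : h → g a linear map. Then T + t𝔗 is a nonabelian embedding tensor for every t ∈ ℂ (i.e. 𝔗 generates a linear deformation of T) if and only if for all u,v ∈ h both of the following hold: (1) [Tu, 𝔗v]_g + [𝔗u, Tv]_g = T(ρ(𝔗u)v) + 𝔗(ρ(Tu)v + [u,v]_h), and (2) [𝔗u, 𝔗v]_g = 𝔗(ρ(𝔗u)v). -/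
variable {g : Type*} [LieRing g] [LieAlgebra ℂ g]
variable {h : Type*} [LieRing h] [LieAlgebra ℂ h]

/-- `𝔗` generates a linear deformation of a nonabelian embedding tensor `T`
(i.e. `T + t𝔗` is a nonabelian embedding tensor for every `t ∈ ℂ`) if and only if for all
`u, v`: (1) `[Tu,𝔗v] + [𝔗u,Tv] = T(ρ(𝔗u)v) + 𝔗(ρ(Tu)v + [u,v]_h)` and
(2) `[𝔗u,𝔗v] = 𝔗(ρ(𝔗u)v)`. -/
theorem linearDeformation_iff (ρ : g →ₗ[ℂ] h →ₗ[ℂ] h)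
    (hρ_der : ∀ (x : g) (u v : h), ρ x ⁅u, v⁆ = ⁅ρ x u, v⁆ + ⁅u, ρ x v⁆)
    (hρ_hom : ∀ (x y : g) (u : h), ρ ⁅x, y⁆ u = ρ x (ρ y u) - ρ y (ρ x u))
    (hρ_coh : ∀ (x : g) (u v : h), ⁅ρ x u, v⁆ = (0 : h))
    (T : h →ₗ[ℂ] g)
    (hT : ∀ u v : h, ⁅T u, T v⁆ = T (ρ (T u) v + ⁅u, v⁆))
    (𝔗 : h →ₗ[ℂ] g) :
    (∀ t : ℂ, ∀ u v : h,
        ⁅(T + t • 𝔗) u, (T + t • 𝔗) v⁆ =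
          (T + t • 𝔗) (ρ ((T + t • 𝔗) u) v + ⁅u, v⁆)) ↔
      ∀ u v : h,
        (⁅T u, 𝔗 v⁆ + ⁅𝔗 u, T v⁆ = T (ρ (𝔗 u) v) + 𝔗 (ρ (T u) v + ⁅u, v⁆)) ∧
        (⁅𝔗 u, 𝔗 v⁆ = 𝔗 (ρ (𝔗 u) v)) := by
  constructor
  · intro H u v
    set a : g := (⁅T u, 𝔗 v⁆ + ⁅𝔗 u, T v⁆) - (T (ρ (𝔗 u) v) + 𝔗 (ρ (T u) v + ⁅u, v⁆)) with ha
    set b : g := ⁅𝔗 u, 𝔗 v⁆ - 𝔗 (ρ (𝔗 u) v) with hb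
    have key : ∀ t : ℂ, t • a + (t * t) • b = 0 := by
      intro t
      have h1 := H t u v
      simp only [LinearMap.add_apply, LinearMap.smul_apply, map_add, map_smul, add_lie,
        lie_add, smul_lie, lie_smul, smul_smul, hT] at h1
      rw [ha, hb]
      simp only [map_add]
      linear_combination (norm := module) h1
    have h1 := key 1
    have h2 := key (-1)
    simp only [one_smul, mul_one, one_mul, neg_smul, neg_mul, neg_neg] at h1 h2
    have hba : a = b := by rwa [neg_add_eq_zero] at h2
    rw [hba] at h1
    have hb0 : b = 0 := by
      have h3 : (2 : ℂ) • b = 0 := by rw [two_smul]; exact h1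
      simpa using (smul_eq_zero.mp h3).resolve_left (by norm_num)
    have ha0 : a = 0 := hba.trans hb0
    exact ⟨sub_eq_zero.mp ha0, sub_eq_zero.mp hb0⟩
  · intro H t u v
    obtain ⟨h1, h2⟩ := H u v
    simp only [LinearMap.add_apply, LinearMap.smul_apply, map_add, map_smul, add_lie,
      lie_add, smul_lie, lie_smul, smul_smul, hT]
    have e1 : ⁅T u, 𝔗 v⁆ = T (ρ (𝔗 u) v) + 𝔗 (ρ (T u) v + ⁅u, v⁆) - ⁅𝔗 u, T v⁆ := by
      rw [← h1]; abel
    simp only [map_add] at e1 ⊢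
    linear_combination (norm := module) t • e1 + (t * t) • h2
end

section
/- Let T : h → g be a nonabelian embedding tensor on a Lie algebra g over ℂ with respect to a coherent action (h;ρ), and suppose 𝔗 : h → g generates a linear deformation of T (i.e. T + t𝔗 is a nonabelian embedding tensor for all t ∈ ℂ). Then for every t ∈ ℂ the bilinear bracket [u,v]_t := [u,v]_T + t·ρ(𝔗u)v on h, where [u,v]_T = ρ(Tu)v + [u,v]_h, satisfies the left Leibniz identity; that is, ω_𝔗(u,v) = ρ(𝔗u)v generates a linear deformation of the descendent Leibniz algebra (h,[-,-]_T). -/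
variable {g : Type*} [LieRing g] [LieAlgebra ℂ g]
variable {h : Type*} [LieRing h] [LieAlgebra ℂ h]

/-- The deformed bracket `[u,v]_t = [u,v]_T + t·ρ(𝔗u)v = ρ(Tu)v + [u,v]_h + t·ρ(𝔗u)v`. -/
def deformedBracket (ρ : g →ₗ[ℂ] h →ₗ[ℂ] h) (T 𝔗 : h →ₗ[ℂ] g) (t : ℂ) (u v : h) : h :=
  ρ (T u) v + ⁅u, v⁆ + t • ρ (𝔗 u) v

/-- if `𝔗` generates a linear deformation of a nonabelian embedding tensor
`T`, then `ω_𝔗(u,v) = ρ(𝔗u)v` generates a linear deformation of the descendent Leibniz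
algebra `(h,[-,-]_T)`: for every `t ∈ ℂ`, the bracket `[u,v]_t = [u,v]_T + t·ρ(𝔗u)v`
satisfies the left Leibniz identity. -/
theorem deformedBracket_leibniz (ρ : g →ₗ[ℂ] h →ₗ[ℂ] h)
    (hρ_der : ∀ (x : g) (u v : h), ρ x ⁅u, v⁆ = ⁅ρ x u, v⁆ + ⁅u, ρ x v⁆)
    (hρ_hom : ∀ (x y : g) (u : h), ρ ⁅x, y⁆ u = ρ x (ρ y u) - ρ y (ρ x u))
    (hρ_coh : ∀ (x : g) (u v : h), ⁅ρ x u, v⁆ = (0 : h))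
    (T : h →ₗ[ℂ] g)
    (hT : ∀ u v : h, ⁅T u, T v⁆ = T (ρ (T u) v + ⁅u, v⁆))
    (𝔗 : h →ₗ[ℂ] g)
    (hdef : ∀ t : ℂ, ∀ u v : h,
      ⁅(T + t • 𝔗) u, (T + t • 𝔗) v⁆ = (T + t • 𝔗) (ρ ((T + t • 𝔗) u) v + ⁅u, v⁆)) :
    ∀ t : ℂ, ∀ u v w : h,
      deformedBracket ρ T 𝔗 t u (deformedBracket ρ T 𝔗 t v w) =
        deformedBracket ρ T 𝔗 t (deformedBracket ρ T 𝔗 t u v) w +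
          deformedBracket ρ T 𝔗 t v (deformedBracket ρ T 𝔗 t u w) := by
  intro t u v w
  have key : ∀ a b : h, deformedBracket ρ T 𝔗 t a b = ρ ((T + t • 𝔗) a) b + ⁅a, b⁆ := by
    intro a b
    simp only [deformedBracket, LinearMap.add_apply, LinearMap.smul_apply, map_add, map_smul,
      LinearMap.smul_apply]
    abel
  simp only [key]
  have hS := hdef t
  set S := T + t • 𝔗 with hSdef
  rw [← hS u v]
  have e1 : ρ ⁅S u, S v⁆ w = ρ (S u) (ρ (S v) w) - ρ (S v) (ρ (S u) w) := hρ_hom _ _ _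
  simp only [map_add, hρ_der, hρ_coh, add_lie, lie_add, e1, zero_add, add_zero,
    lie_lie]
  abel
end

section
/- Let T : h → g be a nonabelian embedding tensor on a Lie algebra g over ℂ with respect to a coherent action (h;ρ), and let 𝔗₁, 𝔗₂ : h → g generate linear deformations T¹_t = T + t𝔗₁ and T²_t = T + t𝔗₂ of T. If the two deformations are equivalent via x ∈ g, i.e. for all t ∈ ℂ the pair (Id_g + t·ad_x, Id_h + t·ρ(x)) is a homomorphism from T²_t to T¹_t (both maps are Lie algebra endomorphisms, T¹_t ∘ (Id_h + t·ρ(x)) = (Id_g + t·ad_x) ∘ T²_t, and (Id_h + t·ρ(x))(ρ(y)u) = ρ((Id_g + t·ad_x)(y))((Id_h + t·ρ(x))(u)) for all y ∈ g, u ∈ h), then (𝔗₂ − 𝔗₁)(u) = T(ρ(x)u) − [x, Tu]_g for all u ∈ h; i.e. 𝔗₂ − 𝔗₁ is the coboundary ∂_T x, so 𝔗₁ and 𝔗₂ define the same class in the second cohomology group of T. -/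
variable {g : Type*} [LieRing g] [LieAlgebra ℂ g]
variable {h : Type*} [LieRing h] [LieAlgebra ℂ h]

/-- if two linear deformations `T¹_t = T + t𝔗₁` and `T²_t = T + t𝔗₂` of a
nonabelian embedding tensor `T` are equivalent via `x ∈ g` (the pair
`(Id_g + t·ad_x, Id_h + t·ρ(x))` being a homomorphism from `T²_t` to `T¹_t` for all `t`),
then `𝔗₂ − 𝔗₁ = ∂_T x`, i.e. `(𝔗₂ − 𝔗₁)(u) = T(ρ(x)u) − [x, Tu]` for all `u`; hence
`𝔗₁` and `𝔗₂` define the same class in the second cohomology group of `T`. -/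
theorem equivalent_deformations_cohomologous (ρ : g →ₗ[ℂ] h →ₗ[ℂ] h)
    (hρ_der : ∀ (x : g) (u v : h), ρ x ⁅u, v⁆ = ⁅ρ x u, v⁆ + ⁅u, ρ x v⁆)
    (hρ_hom : ∀ (x y : g) (u : h), ρ ⁅x, y⁆ u = ρ x (ρ y u) - ρ y (ρ x u))
    (hρ_coh : ∀ (x : g) (u v : h), ⁅ρ x u, v⁆ = (0 : h))
    (T : h →ₗ[ℂ] g)
    (hT : ∀ u v : h, ⁅T u, T v⁆ = T (ρ (T u) v + ⁅u, v⁆))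
    (𝔗₁ 𝔗₂ : h →ₗ[ℂ] g)
    (hdef₁ : ∀ t : ℂ, ∀ u v : h,
      ⁅(T + t • 𝔗₁) u, (T + t • 𝔗₁) v⁆ = (T + t • 𝔗₁) (ρ ((T + t • 𝔗₁) u) v + ⁅u, v⁆))
    (hdef₂ : ∀ t : ℂ, ∀ u v : h,
      ⁅(T + t • 𝔗₂) u, (T + t • 𝔗₂) v⁆ = (T + t • 𝔗₂) (ρ ((T + t • 𝔗₂) u) v + ⁅u, v⁆))
    (x : g)
    -- Id_g + t·ad_x is a Lie algebra endomorphism of g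
    (hLieg : ∀ t : ℂ, ∀ y z : g,
      ⁅y, z⁆ + t • ⁅x, ⁅y, z⁆⁆ = ⁅y + t • ⁅x, y⁆, z + t • ⁅x, z⁆⁆)
    -- Id_h + t·ρ(x) is a Lie algebra endomorphism of h
    (hLieh : ∀ t : ℂ, ∀ u v : h,
      ⁅u, v⁆ + t • ρ x ⁅u, v⁆ = ⁅u + t • ρ x u, v + t • ρ x v⁆)
    -- T¹_t ∘ (Id_h + t·ρ(x)) = (Id_g + t·ad_x) ∘ T²_t
    (hhom : ∀ t : ℂ, ∀ u : h,
      (T + t • 𝔗₁) (u + t • ρ x u) = (T + t • 𝔗₂) u + t • ⁅x, (T + t • 𝔗₂) u⁆)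
    -- compatibility with the action ρ
    (hcompat : ∀ t : ℂ, ∀ (y : g) (u : h),
      ρ y u + t • ρ x (ρ y u) = ρ (y + t • ⁅x, y⁆) (u + t • ρ x u)) :
    ∀ u : h, 𝔗₂ u - 𝔗₁ u = T (ρ x u) - ⁅x, T u⁆ := by
  intro u
  have h1 := hhom 1 u
  have h2 := hhom (-1) u
  simp only [LinearMap.add_apply, LinearMap.smul_apply, map_add, map_smul, one_smul, neg_smul,
    smul_neg, smul_add, smul_smul, map_neg, neg_neg, lie_add, lie_neg, LinearMap.neg_apply] at h1 h2
  have key : (2:ℂ) • (𝔗₂ u - 𝔗₁ u) = (2:ℂ) • (T (ρ x u) - ⁅x, T u⁆) := by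
    linear_combination (norm := module) h2 - h1
  exact smul_right_injective _ (two_ne_zero (α := ℂ)) key
end
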